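/- Let α satisfy 1/3 < α ≤ (3 − √5)/2 and let (n_k)_{k≥1} be any sequence of positive integers. Let (t_i)_{i≥1} be the sequence obtained by concatenating, for k = 1, 2, 3, …, the block (1,−1) repeated n_{2k−1} times followed by the block (0) repeated n_{2k} times. Then the real number t = ∑_{i=1}^∞ t_i α^i has exactly one {-1,0,1} α-expansion, namely (t_i)_{i≥1}. -/

import Mathlib

open MeasureTheory Filter Real
open scoped MeasureTheory

noncomputable section

/-- The middle-`(1-2α)` Cantor set `Γ_α = {∑_{i≥1} ε_i α^i : ε_i ∈ {0,1}}`. -/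
def Gamma (α : ℝ) : Set ℝ :=
  {x | ∃ ε : ℕ → ℝ, (∀ i, ε i = 0 ∨ ε i = 1) ∧ x = ∑' i : ℕ, ε i * α ^ (i + 1)}

/-- `a` is a `{-1,0,1}` `α`-expansion of `t`; `a i` is the digit `t_{i+1}`. -/
def IsExpansion (α t : ℝ) (a : ℕ → ℝ) : Prop :=
  (∀ i, a i = -1 ∨ a i = 0 ∨ a i = 1) ∧ t = ∑' i : ℕ, a i * α ^ (i + 1)

/-- The set of `t` having exactly one `{-1,0,1}` `α`-expansion. -/
def uniqSet (α : ℝ) : Set ℝ := {t | ∃! a : ℕ → ℝ, IsExpansion α t a}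

/-- `D_α`: possible Hausdorff dimensions of `Γ_α ∩ (Γ_α + t)` for `t ∈ u_α`. -/
def D (α : ℝ) : Set ℝ :=
  {d | ∃ t ∈ uniqSet α, d = (dimH (Gamma α ∩ ((· + t) '' Gamma α))).toReal}

open scoped Topology

/-!
Let `T_m = ∑_{j ≥ 0} t_{m+j} α^j`, so that `T_m = t_m + α T_{m+1}`. At the start of a block
the tail satisfies `T_m = α T_{m+1}` or `T_m = 1 - α + α² T_{m+2}`, and `1/(1+α)` is a fixed point
of the second map; a contraction argument therefore gives `0 ≤ T_m ≤ 1/(1+α)` there, with `T_m > 0`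
because another block `(1,-1)` follows. Hence `α T_{m+1} = T_m - t_m` lies in `(-α, -α/(1+α)]` when
`t_m = 1` and in `[0, α/(1+α)]` otherwise, whereas any expansion `s` of `t` satisfies
`|T_m - s_m| ≤ α/(1-α)`. Since `α ≤ (3-√5)/2` gives `α/(1-α) ≤ 1-α`, these windows determine `s_m`,
and induction on `m` gives `s = t`.
-/

section TailSum

variable {α : ℝ} {c : ℕ → ℝ}

def tailSum (α : ℝ) (c : ℕ → ℝ) (m : ℕ) : ℝ := ∑' j : ℕ, c (m + j) * α ^ j

lemma norm_mul_pow_le (hα0 : 0 ≤ α) (hc : ∀ i, |c i| ≤ 1) (i j : ℕ) :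
    ‖c i * α ^ j‖ ≤ α ^ j := by
  rw [Real.norm_eq_abs, abs_mul, abs_of_nonneg (pow_nonneg hα0 j)]
  exact mul_le_of_le_one_left (pow_nonneg hα0 j) (hc i)

lemma summable_tailSum (hα0 : 0 ≤ α) (hα1 : α < 1) (hc : ∀ i, |c i| ≤ 1) (m : ℕ) :
    Summable fun j : ℕ => c (m + j) * α ^ j :=
  .of_norm_bounded (summable_geometric_of_lt_one hα0 hα1) fun j => norm_mul_pow_le hα0 hc (m + j) j

lemma abs_tailSum_le (hα0 : 0 ≤ α) (hα1 : α < 1) (hc : ∀ i, |c i| ≤ 1) (m : ℕ) :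
    |tailSum α c m| ≤ (1 - α)⁻¹ :=
  tsum_of_norm_bounded (hasSum_geometric_of_lt_one hα0 hα1) fun j =>
    norm_mul_pow_le hα0 hc (m + j) j

lemma tailSum_eq_add (hα0 : 0 ≤ α) (hα1 : α < 1) (hc : ∀ i, |c i| ≤ 1) (m : ℕ) :
    tailSum α c m = c m + α * tailSum α c (m + 1) := by
  rw [tailSum, (summable_tailSum hα0 hα1 hc m).tsum_eq_zero_add, tailSum, ← tsum_mul_left]
  simp only [add_zero, pow_zero, mul_one, pow_succ, ← add_assoc, add_right_comm m]
  congr 1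
  exact tsum_congr fun j => by ring

lemma abs_tailSum_sub_le (hα0 : 0 ≤ α) (hα1 : α < 1) (hc : ∀ i, |c i| ≤ 1) (m : ℕ) :
    |tailSum α c m - c m| ≤ α / (1 - α) := by
  rw [tailSum_eq_add hα0 hα1 hc, add_sub_cancel_left, abs_mul, abs_of_nonneg hα0, div_eq_mul_inv]
  exact mul_le_mul_of_nonneg_left (abs_tailSum_le hα0 hα1 hc _) hα0

lemma tsum_mul_pow_succ_eq_mul_tailSum (c : ℕ → ℝ) :
    ∑' i : ℕ, c i * α ^ (i + 1) = α * tailSum α c 0 := by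
  rw [tailSum, ← tsum_mul_left]
  exact tsum_congr fun i => by rw [zero_add, pow_succ]; ring

end TailSum

lemma nonpos_of_le_mul_of_bddAbove {P : ℕ → Prop} {g : ℕ → ℝ} {ρ B : ℝ}
    (hρ0 : 0 ≤ ρ) (hρ1 : ρ < 1) (hB : ∀ m, P m → g m ≤ B)
    (hstep : ∀ m, P m → ∃ m', P m' ∧ ∃ r, 0 ≤ r ∧ r ≤ ρ ∧ g m ≤ r * g m') :
    ∀ m, P m → g m ≤ 0 := by
  have hdecay : ∀ j m, P m → g m ≤ ρ ^ j * max B 0 := by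
    intro j
    induction j with
    | zero => exact fun m hm => by simpa using (hB m hm).trans (le_max_left B 0)
    | succ j ih =>
      intro m hm
      obtain ⟨m', hm', r, hr0, hrρ, hgm⟩ := hstep m hm
      rw [pow_succ, mul_right_comm]
      rcases le_total (g m') 0 with hneg | hpos
      · have : 0 ≤ ρ ^ j * max B 0 * ρ := by positivity
        nlinarith
      · nlinarith [ih m' hm']
  intro m hm
  have hlim : Tendsto (fun j : ℕ => ρ ^ j * max B 0) atTop (𝓝 0) := by
    simpa using (tendsto_pow_atTop_nhds_zero_of_lt_one hρ0 hρ1).mul_const (max B 0)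
  exact ge_of_tendsto' hlim fun j => hdecay j m hm

/-- Equivalently, `a` is a concatenation of the blocks `(1, -1)` and `(0)`. -/
structure IsBlockSeq (a : ℕ → ℝ) : Prop where
  digit : ∀ i, a i = -1 ∨ a i = 0 ∨ a i = 1
  zero_ne_neg_one : a 0 ≠ -1
  succ_eq_neg_one_iff : ∀ i, a (i + 1) = -1 ↔ a i = 1

namespace IsBlockSeq

variable {α : ℝ} {a : ℕ → ℝ}

lemma abs_le_one (ha : IsBlockSeq a) (i : ℕ) : |a i| ≤ 1 := by
  rcases ha.digit i with h | h | h <;> simp [h]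

lemma succ_ne_neg_one (ha : IsBlockSeq a) {i : ℕ} (hi : a i ≠ 1) : a (i + 1) ≠ -1 :=
  fun h => hi ((ha.succ_eq_neg_one_iff i).1 h)

lemma tailSum_cases (ha : IsBlockSeq a) (hα0 : 0 ≤ α) (hα1 : α < 1) {m : ℕ} (hm : a m ≠ -1) :
    (a m = 0 ∧ a (m + 1) ≠ -1 ∧ tailSum α a m = α * tailSum α a (m + 1)) ∨
    (a m = 1 ∧ a (m + 2) ≠ -1 ∧ tailSum α a m = 1 - α + α ^ 2 * tailSum α a (m + 2)) := by
  have hshift := tailSum_eq_add hα0 hα1 ha.abs_le_one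
  rcases ha.digit m with h | h | h
  · exact absurd h hm
  · exact .inl ⟨h, ha.succ_ne_neg_one (by simp [h]), by rw [hshift, h, zero_add]⟩
  · have hnext : a (m + 1) = -1 := (ha.succ_eq_neg_one_iff m).2 h
    refine .inr ⟨h, ha.succ_ne_neg_one (by rw [hnext]; norm_num), ?_⟩
    rw [hshift, hshift (m + 1), h, hnext]
    ring

lemma tailSum_nonneg (ha : IsBlockSeq a) (hα0 : 0 ≤ α) (hα1 : α < 1) {m : ℕ} (hm : a m ≠ -1) :
    0 ≤ tailSum α a m := by
  suffices ∀ m, a m ≠ -1 → -tailSum α a m ≤ 0 from neg_nonpos.1 (this m hm)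
  refine nonpos_of_le_mul_of_bddAbove (B := (1 - α)⁻¹) hα0 hα1
    (fun m _ => neg_le.1 (abs_le.1 (abs_tailSum_le hα0 hα1 ha.abs_le_one m)).1) fun m hm => ?_
  rcases ha.tailSum_cases hα0 hα1 hm with ⟨-, hm', h⟩ | ⟨-, hm', h⟩
  · exact ⟨m + 1, hm', α, hα0, le_rfl, by rw [h, mul_neg]⟩
  · refine ⟨m + 2, hm', α ^ 2, sq_nonneg α, ?_, ?_⟩
    · nlinarith
    · rw [h]; nlinarith

lemma tailSum_le (ha : IsBlockSeq a) (hα0 : 0 ≤ α) (hα1 : α < 1) {m : ℕ} (hm : a m ≠ -1) :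
    tailSum α a m ≤ (1 + α)⁻¹ := by
  have hu0 : 0 ≤ (1 + α)⁻¹ := by positivity
  have hu : (1 + α) * (1 + α)⁻¹ = 1 := mul_inv_cancel₀ (by positivity)
  suffices ∀ m, a m ≠ -1 → tailSum α a m - (1 + α)⁻¹ ≤ 0 from sub_nonpos.1 (this m hm)
  refine nonpos_of_le_mul_of_bddAbove (B := (1 - α)⁻¹) hα0 hα1 (fun m _ => ?_) fun m hm => ?_
  · linarith [le_of_abs_le (abs_tailSum_le hα0 hα1 ha.abs_le_one m)]
  rcases ha.tailSum_cases hα0 hα1 hm with ⟨-, hm', h⟩ | ⟨-, hm', h⟩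
  · exact ⟨m + 1, hm', α, hα0, le_rfl, by rw [h]; nlinarith⟩
  · refine ⟨m + 2, hm', α ^ 2, sq_nonneg α, by nlinarith, ?_⟩
    rw [h]; nlinarith

lemma tailSum_pos (ha : IsBlockSeq a) (hone : ∀ m, ∃ p, m ≤ p ∧ a p = 1)
    (hα0 : 0 < α) (hα1 : α < 1) {m : ℕ} (hm : a m ≠ -1) : 0 < tailSum α a m := by
  obtain ⟨p, hmp, hp⟩ := hone m
  obtain ⟨d, rfl⟩ := Nat.exists_eq_add_of_le hmp
  induction d using Nat.strong_induction_on generalizing m with | _ d ih =>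
  rcases ha.tailSum_cases hα0.le hα1 hm with ⟨h0, hm', h⟩ | ⟨-, hm', h⟩
  · cases d with
    | zero => simp [h0] at hp
    | succ d =>
      rw [h]
      exact mul_pos hα0 (ih d (by omega) hm' (by omega) (by rwa [add_right_comm]))
  · rw [h]
    nlinarith [ha.tailSum_nonneg hα0.le hα1 hm', sq_nonneg α]

lemma eq_of_abs_tailSum_sub_le (ha : IsBlockSeq a) (hone : ∀ m, ∃ p, m ≤ p ∧ a p = 1)
    (hα0 : 0 < α) (hα1 : α < 1) (hαq : α ≤ (1 - α) ^ 2) {m : ℕ} {e : ℝ}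
    (he : e = -1 ∨ e = 0 ∨ e = 1) (h : |tailSum α a m - e| ≤ α / (1 - α)) : e = a m := by
  have hα2 : α ^ 2 + 2 * α < 1 := by nlinarith
  have hu : (1 + α) * (1 + α)⁻¹ = 1 := mul_inv_cancel₀ (by positivity)
  have h1α : 0 < 1 - α := by linarith
  obtain ⟨hlo, hhi⟩ : -α ≤ (tailSum α a m - e) * (1 - α) ∧ (tailSum α a m - e) * (1 - α) ≤ α := by
    rw [← abs_le, abs_mul, abs_of_pos h1α, ← le_div_iff₀ h1α]
    exact h
  by_cases hm : a m = -1
  · have hm' : a (m + 1) ≠ -1 := ha.succ_ne_neg_one (by rw [hm]; norm_num)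
    have hT1 := ha.tailSum_le hα0.le hα1 hm'
    have hs := tailSum_eq_add hα0.le hα1 ha.abs_le_one m
    rw [hm] at hs ⊢
    rcases he with rfl | rfl | rfl
    · rfl
    all_goals nlinarith [mul_le_mul_of_nonneg_left hT1 (mul_nonneg hα0.le (sub_nonneg.2 hα1.le))]
  rcases ha.tailSum_cases hα0.le hα1 hm with ⟨h0, hm', hs⟩ | ⟨h1, hm', hs⟩
  · have hT0 := ha.tailSum_nonneg hα0.le hα1 hm'
    have hT1 := ha.tailSum_le hα0.le hα1 hm'
    rw [h0]
    rcases he with rfl | rfl | rfl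
    · nlinarith [mul_nonneg (mul_nonneg hα0.le hT0) h1α.le]
    · rfl
    · nlinarith [mul_le_mul_of_nonneg_left hT1 (mul_nonneg hα0.le (sub_nonneg.2 hα1.le))]
  · have hW := ha.tailSum_pos hone hα0 hα1 hm'
    rw [h1]
    rcases he with rfl | rfl | rfl
    · nlinarith [mul_pos (pow_pos hα0 2) hW]
    · nlinarith [mul_pos (mul_pos (pow_pos hα0 2) hW) (sub_pos.2 hα1)]
    · rfl

theorem eq_of_isExpansion (ha : IsBlockSeq a) (hone : ∀ m, ∃ p, m ≤ p ∧ a p = 1)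
    (hα0 : 0 < α) (hα1 : α < 1) (hαq : α ≤ (1 - α) ^ 2) {b : ℕ → ℝ}
    (hb : IsExpansion α (∑' i : ℕ, a i * α ^ (i + 1)) b) : b = a := by
  have hb1 : ∀ i, |b i| ≤ 1 := fun i => by rcases hb.1 i with h | h | h <;> simp [h]
  have hdigit : ∀ m, tailSum α b m = tailSum α a m → b m = a m := fun m h =>
    ha.eq_of_abs_tailSum_sub_le hone hα0 hα1 hαq (hb.1 m) (h ▸ abs_tailSum_sub_le hα0.le hα1 hb1 m)
  have htail : ∀ m, tailSum α b m = tailSum α a m := by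
    intro m
    induction m with
    | zero =>
      have h := hb.2
      rw [tsum_mul_pow_succ_eq_mul_tailSum, tsum_mul_pow_succ_eq_mul_tailSum] at h
      exact (mul_left_cancel₀ hα0.ne' h).symm
    | succ m ih =>
      have h := ih
      rw [tailSum_eq_add hα0.le hα1 hb1, tailSum_eq_add hα0.le hα1 ha.abs_le_one, hdigit m ih] at h
      exact mul_left_cancel₀ hα0.ne' (add_left_cancel h)
  exact funext fun m => hdigit m (htail m)

lemma const_zero : IsBlockSeq fun _ => 0 where
  digit _ := by norm_num
  zero_ne_neg_one := by norm_num
  succ_eq_neg_one_iff _ := by norm_num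

lemma getD_pair : IsBlockSeq ([1, -1].getD · 0) where
  digit i := by rcases i with _ | _ | i <;> simp
  zero_ne_neg_one := by norm_num
  succ_eq_neg_one_iff i := by rcases i with _ | _ | i <;> norm_num

lemma getD_replicate_zero (q : ℕ) : IsBlockSeq ((List.replicate q (0 : ℝ)).getD · 0) := by
  simpa [List.getD_eq_getElem?_getD] using const_zero

lemma getD_append {l₁ l₂ : List ℝ} (h₁ : IsBlockSeq (l₁.getD · 0))
    (h₂ : IsBlockSeq (l₂.getD · 0)) : IsBlockSeq ((l₁ ++ l₂).getD · 0) where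
  digit i := by
    rcases lt_or_ge i l₁.length with hi | hi
    · rw [List.getD_append _ _ _ _ hi]; exact h₁.digit i
    · rw [List.getD_append_right _ _ _ _ hi]; exact h₂.digit _
  zero_ne_neg_one := by
    rcases l₁ with _ | ⟨x, l₁⟩
    · exact h₂.zero_ne_neg_one
    · exact h₁.zero_ne_neg_one
  succ_eq_neg_one_iff i := by
    rcases lt_trichotomy (i + 1) l₁.length with hi | hi | hi
    · rw [List.getD_append _ _ _ _ hi, List.getD_append _ _ _ _ (by omega)]
      exact h₁.succ_eq_neg_one_iff i
    · have hend : l₁.getD (i + 1) 0 = 0 := List.getD_eq_default _ _ hi.ge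
      rw [List.getD_append_right _ _ _ _ hi.ge, List.getD_append _ _ _ _ (by omega), hi,
        Nat.sub_self]
      refine iff_of_false h₂.zero_ne_neg_one fun h => ?_
      have := (h₁.succ_eq_neg_one_iff i).2 h
      rw [hend] at this
      norm_num at this
    · rw [List.getD_append_right _ _ _ _ (by omega), List.getD_append_right _ _ _ _ (by omega),
        show i + 1 - l₁.length = i - l₁.length + 1 by omega]
      exact h₂.succ_eq_neg_one_iff _

lemma getD_flatten {Ls : List (List ℝ)} (h : ∀ l ∈ Ls, IsBlockSeq (l.getD · 0)) :
    IsBlockSeq (Ls.flatten.getD · 0) := by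
  induction Ls with
  | nil => simpa using const_zero
  | cons l Ls ih =>
    rw [List.flatten_cons]
    exact (h l List.mem_cons_self).getD_append (ih fun l' hl' => h l' (List.mem_cons_of_mem l hl'))

lemma of_forall_le (h : ∀ N, ∃ c, IsBlockSeq c ∧ ∀ i ≤ N, a i = c i) : IsBlockSeq a where
  digit i := by
    obtain ⟨c, hc, hac⟩ := h i
    rw [hac i le_rfl]; exact hc.digit i
  zero_ne_neg_one := by
    obtain ⟨c, hc, hac⟩ := h 0
    rw [hac 0 le_rfl]; exact hc.zero_ne_neg_one
  succ_eq_neg_one_iff i := by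
    obtain ⟨c, hc, hac⟩ := h (i + 1)
    rw [hac i (by omega), hac (i + 1) le_rfl]; exact hc.succ_eq_neg_one_iff i

end IsBlockSeq

section Blocks

variable {n : ℕ → ℕ} {L : ℕ → List ℝ}

lemma isBlockSeq_getD_of_blocks (hL0 : L 0 = [])
    (hLs : ∀ k : ℕ, L (k + 1) =
      L k ++ (List.replicate (n (2 * k + 1)) [(1 : ℝ), -1]).flatten ++
        List.replicate (n (2 * k + 2)) (0 : ℝ))
    (k : ℕ) : IsBlockSeq ((L k).getD · 0) := by
  induction k with
  | zero => simpa [hL0] using IsBlockSeq.const_zero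
  | succ k ih =>
    rw [hLs k]
    refine (ih.getD_append (.getD_flatten fun l hl => ?_)).getD_append (.getD_replicate_zero _)
    rw [List.eq_of_mem_replicate hl]
    exact .getD_pair

lemma length_lt_length_succ_of_blocks (hn : ∀ k, 1 ≤ n k)
    (hLs : ∀ k : ℕ, L (k + 1) =
      L k ++ (List.replicate (n (2 * k + 1)) [(1 : ℝ), -1]).flatten ++
        List.replicate (n (2 * k + 2)) (0 : ℝ))
    (k : ℕ) : (L k).length < (L (k + 1)).length := by
  simpa [hLs k] using .inl (hn (2 * k + 1))

lemma getD_length_of_blocks (hn : ∀ k, 1 ≤ n k)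
    (hLs : ∀ k : ℕ, L (k + 1) =
      L k ++ (List.replicate (n (2 * k + 1)) [(1 : ℝ), -1]).flatten ++
        List.replicate (n (2 * k + 2)) (0 : ℝ))
    (k : ℕ) : (L (k + 1)).getD (L k).length 0 = 1 := by
  obtain ⟨s, hs⟩ := Nat.exists_eq_add_of_le' (hn (2 * k + 1))
  rw [hLs k, List.append_assoc, List.getD_append_right _ _ _ _ le_rfl, Nat.sub_self, hs,
    List.replicate_succ]
  rfl

end Blocks

theorem stmt13 (α : ℝ) (hα1 : 1 / 3 < α) (hα2 : α ≤ (3 - Real.sqrt 5) / 2)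
    (n : ℕ → ℕ) (hn : ∀ k, 1 ≤ n k)
    -- `L k` is the prefix of the sequence consisting of the first `k` pairs of blocks
    -- `(1,-1)^{n_{2k-1}} 0^{n_{2k}}`.
    (L : ℕ → List ℝ) (hL0 : L 0 = [])
    (hLs : ∀ k : ℕ, L (k + 1) =
      L k ++ (List.replicate (n (2 * k + 1)) [(1 : ℝ), -1]).flatten ++
        List.replicate (n (2 * k + 2)) (0 : ℝ))
    -- `a` is the infinite concatenation of all the blocks.
    (a : ℕ → ℝ) (ha : ∀ (k i : ℕ), i < (L k).length → a i = (L k).getD i 0) :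
    IsExpansion α (∑' i : ℕ, a i * α ^ (i + 1)) a ∧
      ∀ b : ℕ → ℝ, IsExpansion α (∑' i : ℕ, a i * α ^ (i + 1)) b → b = a := by
  have hα0 : 0 < α := by linarith
  have hsqrt5 := Real.sq_sqrt (show (0 : ℝ) ≤ 5 by norm_num)
  have hα_lt_one : α < 1 := by nlinarith [Real.sqrt_nonneg 5]
  have hαq : α ≤ (1 - α) ^ 2 := by nlinarith [Real.sqrt_nonneg 5]
  have hlen : ∀ k, k ≤ (L k).length := by
    intro k
    induction k with
    | zero => exact Nat.zero_le _
    | succ k ih => exact ih.trans_lt (length_lt_length_succ_of_blocks hn hLs k)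
  have hblock : IsBlockSeq a := .of_forall_le fun N =>
    ⟨_, isBlockSeq_getD_of_blocks hL0 hLs (N + 1), fun i hi =>
      ha _ i (by have := hlen (N + 1); omega)⟩
  have hone : ∀ m, ∃ p, m ≤ p ∧ a p = 1 := fun m =>
    ⟨(L m).length, hlen m, by
      rw [ha (m + 1) _ (length_lt_length_succ_of_blocks hn hLs m), getD_length_of_blocks hn hLs m]⟩
  exact ⟨⟨hblock.digit, rfl⟩, fun b hb => hblock.eq_of_isExpansion hone hα0 hα_lt_one hαq hb⟩
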